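/- Let A₁ ∈ ℝ^{n₁×n₁}, A₂ ∈ ℝ^{n₂×n₂}, B₁ ∈ ℝ^{n₁×m}, B₂ ∈ ℝ^{n₂×m}, C₁ ∈ ℝ^{p×n₁}, C₂ ∈ ℝ^{p×n₂}, K₁ ∈ ℝ^{n₂×n₁}, K₂ ∈ ℝ^{n₁×n₂}. Suppose there exist constants α, β > 0 such that ‖e^{A_D t}‖ ≤ β e^{−α t} for all t ≥ 0, where A_D = blockdiag(A₁, A₂) and ‖·‖ denotes the operator norm, and suppose max(‖K₁‖, ‖K₂‖) < √(2α)/β. Then for each q ∈ {1,2} the series Σ_{k=1}^∞ P_q^{(k)} of level-k reachability Gramians and the series Σ_{k=1}^∞ Q_q^{(k)} of level-k observability Gramians converge; that is, the infinite reachability and observability Gramians of both modes exist. -/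

import Mathlib

/-!
Each level-`k` functional is a product of `k` matrix exponentials, `k - 1` couplings and one
input matrix, so submultiplicativity of the ℓ² operator norm bounds it by
`β^k κ^(k-1) b e^{-α (t₁ + ⋯ + t_k)}` with `κ = max(‖K₁‖, ‖K₂‖)` and `b = max(‖B₁‖, ‖B₂‖)`;
the per-mode decay of `e^{A_q t}` comes from that of `e^{A_D t}`, of which it is a diagonal
block. Every entry of `g gᵀ` is then bounded by the square of this, whose integral over
`[0,∞)^k` is `β^{2k} κ^{2(k-1)} b² (2α)^{-k}`: the level-`k` Gramians decay geometrically with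
ratio `β²κ²/(2α) < 1`. Observability reduces to reachability of the dual system `(Aᵀ, Cᵀ)`, in which
the couplings become `K₂ᵀ` and `K₁ᵀ`.
-/

open Matrix MeasureTheory

/-- The Euclidean (`ℓ²`) operator norm of a real matrix. -/
noncomputable def opNorm {a b : Type*} [Fintype a] [Fintype b] [DecidableEq b]
    (M : Matrix a b ℝ) : ℝ :=
  ‖LinearMap.toContinuousLinearMap (Matrix.toEuclideanLin M)‖

/-- The pair of level-`(k+1)` reachability energy functionals for the two-mode switched
system: the first component is the functional for the alternating mode sequence starting
in mode 1, the second the one starting in mode 2.  Here `K1 : ℝ^{n₂×n₁}` couples mode 1 to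
mode 2 and `K2 : ℝ^{n₁×n₂}` couples mode 2 to mode 1, so that
`g^r_{q₁,…,q_k}(t₁,…,t_k) = e^{A_{q₁}t₁} K_{q₂→q₁} e^{A_{q₂}t₂} ⋯ e^{A_{q_k}t_k} B_{q_k}`. -/
noncomputable def reachFun {n1 n2 m : ℕ}
    (A1 : Matrix (Fin n1) (Fin n1) ℝ) (A2 : Matrix (Fin n2) (Fin n2) ℝ)
    (B1 : Matrix (Fin n1) (Fin m) ℝ) (B2 : Matrix (Fin n2) (Fin m) ℝ)
    (K1 : Matrix (Fin n2) (Fin n1) ℝ) (K2 : Matrix (Fin n1) (Fin n2) ℝ) :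
    (k : ℕ) → ((Fin (k + 1) → ℝ) → Matrix (Fin n1) (Fin m) ℝ) ×
      ((Fin (k + 1) → ℝ) → Matrix (Fin n2) (Fin m) ℝ)
  | 0 => (fun t => NormedSpace.exp (t 0 • A1) * B1,
          fun t => NormedSpace.exp (t 0 • A2) * B2)
  | k + 1 =>
      (fun t => NormedSpace.exp (t 0 • A1) * K2 *
        (reachFun A1 A2 B1 B2 K1 K2 k).2 (fun i => t i.succ),
       fun t => NormedSpace.exp (t 0 • A2) * K1 *
        (reachFun A1 A2 B1 B2 K1 K2 k).1 (fun i => t i.succ))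

/-- The level-`(k+1)` reachability Gramian of mode 1, defined entrywise as the iterated
integral of `g^r (g^r)ᵀ` over `[0,∞)^{k+1}`. -/
noncomputable def reachGram1 {n1 n2 m : ℕ}
    (A1 : Matrix (Fin n1) (Fin n1) ℝ) (A2 : Matrix (Fin n2) (Fin n2) ℝ)
    (B1 : Matrix (Fin n1) (Fin m) ℝ) (B2 : Matrix (Fin n2) (Fin m) ℝ)
    (K1 : Matrix (Fin n2) (Fin n1) ℝ) (K2 : Matrix (Fin n1) (Fin n2) ℝ) (k : ℕ) :
    Matrix (Fin n1) (Fin n1) ℝ :=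
  Matrix.of fun i j =>
    ∫ t in Set.univ.pi (fun _ : Fin (k + 1) => Set.Ioi (0:ℝ)),
      ((reachFun A1 A2 B1 B2 K1 K2 k).1 t * ((reachFun A1 A2 B1 B2 K1 K2 k).1 t)ᵀ) i j

/-- The level-`(k+1)` reachability Gramian of mode 2. -/
noncomputable def reachGram2 {n1 n2 m : ℕ}
    (A1 : Matrix (Fin n1) (Fin n1) ℝ) (A2 : Matrix (Fin n2) (Fin n2) ℝ)
    (B1 : Matrix (Fin n1) (Fin m) ℝ) (B2 : Matrix (Fin n2) (Fin m) ℝ)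
    (K1 : Matrix (Fin n2) (Fin n1) ℝ) (K2 : Matrix (Fin n1) (Fin n2) ℝ) (k : ℕ) :
    Matrix (Fin n2) (Fin n2) ℝ :=
  Matrix.of fun i j =>
    ∫ t in Set.univ.pi (fun _ : Fin (k + 1) => Set.Ioi (0:ℝ)),
      ((reachFun A1 A2 B1 B2 K1 K2 k).2 t * ((reachFun A1 A2 B1 B2 K1 K2 k).2 t)ᵀ) i j

/-- The pair of level-`(k+1)` observability energy functionals for the two-mode switched
system: the first component is the functional for the alternating mode sequence *ending*
in mode 1, the second for the one ending in mode 2.  Here `K1 : ℝ^{n₂×n₁}` couples mode 1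
to mode 2 and `K2 : ℝ^{n₁×n₂}` couples mode 2 to mode 1, and
`g^o(t_k,…,t₁) = C_{q_k} e^{A_{q_k}t_k} K_{q_k←q_{k−1}} ⋯ K_{q₂←q₁} e^{A_{q₁}t₁}`;
the argument `t 0` is the *last* time variable `t₁`. -/
noncomputable def obsFun {n1 n2 p : ℕ}
    (A1 : Matrix (Fin n1) (Fin n1) ℝ) (A2 : Matrix (Fin n2) (Fin n2) ℝ)
    (C1 : Matrix (Fin p) (Fin n1) ℝ) (C2 : Matrix (Fin p) (Fin n2) ℝ)
    (K1 : Matrix (Fin n2) (Fin n1) ℝ) (K2 : Matrix (Fin n1) (Fin n2) ℝ) :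
    (k : ℕ) → ((Fin (k + 1) → ℝ) → Matrix (Fin p) (Fin n1) ℝ) ×
      ((Fin (k + 1) → ℝ) → Matrix (Fin p) (Fin n2) ℝ)
  | 0 => (fun t => C1 * NormedSpace.exp (t 0 • A1),
          fun t => C2 * NormedSpace.exp (t 0 • A2))
  | k + 1 =>
      (fun t => (obsFun A1 A2 C1 C2 K1 K2 k).2 (fun i => t i.succ) * K1 *
        NormedSpace.exp (t 0 • A1),
       fun t => (obsFun A1 A2 C1 C2 K1 K2 k).1 (fun i => t i.succ) * K2 *
        NormedSpace.exp (t 0 • A2))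

/-- The level-`(k+1)` observability Gramian of mode 1, defined entrywise as the iterated
integral of `(g^o)ᵀ g^o` over `[0,∞)^{k+1}`. -/
noncomputable def obsGram1 {n1 n2 p : ℕ}
    (A1 : Matrix (Fin n1) (Fin n1) ℝ) (A2 : Matrix (Fin n2) (Fin n2) ℝ)
    (C1 : Matrix (Fin p) (Fin n1) ℝ) (C2 : Matrix (Fin p) (Fin n2) ℝ)
    (K1 : Matrix (Fin n2) (Fin n1) ℝ) (K2 : Matrix (Fin n1) (Fin n2) ℝ) (k : ℕ) :
    Matrix (Fin n1) (Fin n1) ℝ :=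
  Matrix.of fun i j =>
    ∫ t in Set.univ.pi (fun _ : Fin (k + 1) => Set.Ioi (0:ℝ)),
      (((obsFun A1 A2 C1 C2 K1 K2 k).1 t)ᵀ * (obsFun A1 A2 C1 C2 K1 K2 k).1 t) i j

/-- The level-`(k+1)` observability Gramian of mode 2. -/
noncomputable def obsGram2 {n1 n2 p : ℕ}
    (A1 : Matrix (Fin n1) (Fin n1) ℝ) (A2 : Matrix (Fin n2) (Fin n2) ℝ)
    (C1 : Matrix (Fin p) (Fin n1) ℝ) (C2 : Matrix (Fin p) (Fin n2) ℝ)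
    (K1 : Matrix (Fin n2) (Fin n1) ℝ) (K2 : Matrix (Fin n1) (Fin n2) ℝ) (k : ℕ) :
    Matrix (Fin n2) (Fin n2) ℝ :=
  Matrix.of fun i j =>
    ∫ t in Set.univ.pi (fun _ : Fin (k + 1) => Set.Ioi (0:ℝ)),
      (((obsFun A1 A2 C1 C2 K1 K2 k).2 t)ᵀ * (obsFun A1 A2 C1 C2 K1 K2 k).2 t) i j

section L2OpNorm

open scoped Matrix.Norms.L2Operator

variable {l m n l' n' : Type*} [Fintype l] [Fintype m] [Fintype n] [DecidableEq n]

lemma opNorm_nonneg (M : Matrix m n ℝ) : 0 ≤ opNorm M := norm_nonneg _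

lemma opNorm_mul_le [DecidableEq l] (M : Matrix m n ℝ) (N : Matrix n l ℝ) :
    opNorm (M * N) ≤ opNorm M * opNorm N :=
  l2_opNorm_mul M N

lemma opNorm_transpose [DecidableEq m] (M : Matrix m n ℝ) : opNorm Mᵀ = opNorm M :=
  l2_opNorm_conjTranspose M

lemma abs_apply_le_opNorm (M : Matrix m n ℝ) (i : m) (j : n) : |M i j| ≤ opNorm M :=
  calc |M i j| = ‖(WithLp.toLp 2 (M.col j)) i‖ := rfl
    _ ≤ ‖WithLp.toLp 2 (M.col j)‖ := PiLp.norm_apply_le _ i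
    _ ≤ ‖M‖ := by simpa using l2_opNorm_mulVec M (EuclideanSpace.single j 1)

lemma opNorm_one_submatrix_le [DecidableEq l] {f : l → n} (hf : Function.Injective f) :
    opNorm ((1 : Matrix n n ℝ).submatrix id f) ≤ 1 := by
  set P := (1 : Matrix n n ℝ).submatrix id f
  have hP : Pᴴ * P = 1 := by
    ext i j
    simp [P, Matrix.mul_apply, Matrix.one_apply, hf.eq_iff]
  have hP_sq : ‖(1 : Matrix l l ℝ)‖ = ‖P‖ * ‖P‖ := hP ▸ l2_opNorm_conjTranspose_mul_self P
  have h_one : ‖(1 : Matrix l l ℝ)‖ ≤ 1 := by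
    rw [← diagonal_one, l2_opNorm_diagonal]
    exact pi_norm_le_iff_of_nonneg zero_le_one |>.2 fun _ => by simp
  show ‖P‖ ≤ 1
  nlinarith [norm_nonneg P]

lemma opNorm_mul_le_of_le [DecidableEq l] {M : Matrix m n ℝ} {N : Matrix n l ℝ} {a c : ℝ}
    (hM : opNorm M ≤ a) (hN : opNorm N ≤ c) : opNorm (M * N) ≤ a * c :=
  (opNorm_mul_le M N).trans
    (mul_le_mul hM hN (opNorm_nonneg N) ((opNorm_nonneg M).trans hM))

lemma opNorm_submatrix_le [DecidableEq m] [Fintype l'] [DecidableEq l'] [Fintype n']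
    [DecidableEq n'] (M : Matrix m n ℝ) {e : l' → m} {f : n' → n}
    (he : Function.Injective e) (hf : Function.Injective f) :
    opNorm (M.submatrix e f) ≤ opNorm M := by
  have hM : M.submatrix e f =
      ((1 : Matrix m m ℝ).submatrix id e)ᵀ * M * (1 : Matrix n n ℝ).submatrix id f := by
    ext i j
    simp [Matrix.mul_apply, Matrix.one_apply]
  calc opNorm (M.submatrix e f) ≤ 1 * opNorm M * 1 := hM ▸ opNorm_mul_le_of_le
        (opNorm_mul_le_of_le ((opNorm_transpose _).trans_le (opNorm_one_submatrix_le he)) le_rfl)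
        (opNorm_one_submatrix_le hf)
    _ = opNorm M := by ring

lemma abs_mul_transpose_apply_le [DecidableEq m] (M : Matrix m n ℝ) (i j : m) :
    |(M * Mᵀ) i j| ≤ opNorm M ^ 2 :=
  calc |(M * Mᵀ) i j| ≤ opNorm (M * Mᵀ) := abs_apply_le_opNorm _ i j
    _ ≤ opNorm M * opNorm Mᵀ := opNorm_mul_le M Mᵀ
    _ = opNorm M ^ 2 := by rw [opNorm_transpose, sq]

end L2OpNorm

section MatrixExp

open NormedSpace

variable {m n : Type*} [Fintype m] [DecidableEq m] [Fintype n] [DecidableEq n]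

lemma exp_fromBlocks_zero (M : Matrix m m ℝ) (N : Matrix n n ℝ) :
    exp (fromBlocks M 0 0 N) = fromBlocks (exp M) 0 0 (exp N) := by
  open scoped Matrix.Norms.Operator in
  let blockDiag : Matrix m m ℝ × Matrix n n ℝ →+* Matrix (m ⊕ n) (m ⊕ n) ℝ :=
    { toFun := fun q => fromBlocks q.1 0 0 q.2
      map_one' := fromBlocks_one
      map_mul' := fun q r => by simp [fromBlocks_multiply]
      map_zero' := fromBlocks_zero
      map_add' := fun q r => by simp [fromBlocks_add] }
  have h_cont : Continuous blockDiag :=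
    continuous_fst.matrix_fromBlocks continuous_const continuous_const continuous_snd
  calc exp (fromBlocks M 0 0 N) = exp (blockDiag (M, N)) := rfl
    _ = blockDiag (exp (M, N)) := (map_exp blockDiag h_cont (M, N)).symm
    _ = fromBlocks (exp M) 0 0 (exp N) :=
        congr_arg₂ (fromBlocks · 0 0 ·) (Prod.fst_exp (M, N)) (Prod.snd_exp (M, N))

lemma opNorm_exp_smul_le_of_fromBlocks (A₁ : Matrix m m ℝ) (A₂ : Matrix n n ℝ) (s : ℝ) :
    opNorm (exp (s • A₁)) ≤ opNorm (exp (s • fromBlocks A₁ 0 0 A₂)) ∧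
      opNorm (exp (s • A₂)) ≤ opNorm (exp (s • fromBlocks A₁ 0 0 A₂)) := by
  rw [fromBlocks_smul, smul_zero, smul_zero, exp_fromBlocks_zero]
  exact ⟨(congrArg opNorm (toBlocks_fromBlocks₁₁ _ _ _ _)).symm.trans_le
      (opNorm_submatrix_le _ Sum.inl_injective Sum.inl_injective),
    (congrArg opNorm (toBlocks_fromBlocks₂₂ _ _ _ _)).symm.trans_le
      (opNorm_submatrix_le _ Sum.inr_injective Sum.inr_injective)⟩

lemma exp_smul_transpose (A : Matrix n n ℝ) (s : ℝ) : exp (s • Aᵀ) = (exp (s • A))ᵀ := by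
  rw [← transpose_smul, exp_transpose]

lemma continuous_exp_smul (A : Matrix n n ℝ) : Continuous fun t : ℝ => exp (t • A) := by
  open scoped Matrix.Norms.Operator in
  exact exp_continuous.comp (continuous_id.smul continuous_const)

end MatrixExp

section OrthantIntegrals

variable {ι : Type*} [Fintype ι] {γ : ℝ}

lemma exp_neg_mul_sum_eq_prod (γ : ℝ) (t : ι → ℝ) :
    Real.exp (-γ * ∑ i, t i) = ∏ i, Real.exp (-γ * t i) := by
  rw [Finset.mul_sum, Real.exp_sum]

lemma volume_restrict_pi_Ioi_zero :
    (volume : Measure (ι → ℝ)).restrict (Set.univ.pi fun _ => Set.Ioi 0) =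
      Measure.pi fun _ => volume.restrict (Set.Ioi 0) :=
  Measure.restrict_pi_pi _ _

lemma integrableOn_exp_neg_mul_sum_pi_Ioi (hγ : 0 < γ) :
    IntegrableOn (fun t : ι → ℝ => Real.exp (-γ * ∑ i, t i))
      (Set.univ.pi fun _ => Set.Ioi 0) := by
  simp only [IntegrableOn, exp_neg_mul_sum_eq_prod, volume_restrict_pi_Ioi_zero]
  exact Integrable.fintype_prod fun _ => integrableOn_exp_mul_Ioi (neg_lt_zero.2 hγ) 0

lemma setIntegral_exp_neg_mul_sum_pi_Ioi (hγ : 0 < γ) :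
    ∫ t in Set.univ.pi (fun _ : ι => Set.Ioi (0 : ℝ)), Real.exp (-γ * ∑ i, t i) =
      γ⁻¹ ^ Fintype.card ι := by
  simp only [exp_neg_mul_sum_eq_prod, volume_restrict_pi_Ioi_zero]
  rw [integral_fintype_prod_eq_pow (fun x => Real.exp (-γ * x)),
    integral_exp_mul_Ioi (neg_lt_zero.2 hγ)]
  simp

variable {F : (ι → ℝ) → ℝ} {D : ℝ}

lemma integrableOn_pi_Ioi_of_abs_le_exp (hF : Continuous F) (hγ : 0 < γ)
    (hbound : ∀ t ∈ Set.univ.pi (fun _ : ι => Set.Ioi (0 : ℝ)),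
      |F t| ≤ D * Real.exp (-γ * ∑ i, t i)) :
    IntegrableOn F (Set.univ.pi fun _ => Set.Ioi 0) :=
  ((integrableOn_exp_neg_mul_sum_pi_Ioi hγ).const_mul D).mono'
    hF.aestronglyMeasurable.restrict
    ((ae_restrict_iff' (MeasurableSet.univ_pi fun _ => measurableSet_Ioi)).2
      (ae_of_all _ hbound))

lemma abs_setIntegral_pi_Ioi_le_of_abs_le_exp (hγ : 0 < γ)
    (hbound : ∀ t ∈ Set.univ.pi (fun _ : ι => Set.Ioi (0 : ℝ)),
      |F t| ≤ D * Real.exp (-γ * ∑ i, t i)) :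
    |∫ t in Set.univ.pi (fun _ : ι => Set.Ioi (0 : ℝ)), F t| ≤ D * γ⁻¹ ^ Fintype.card ι := by
  rw [← setIntegral_exp_neg_mul_sum_pi_Ioi hγ, ← integral_const_mul]
  exact norm_integral_le_of_norm_le ((integrableOn_exp_neg_mul_sum_pi_Ioi hγ).const_mul D)
    ((ae_restrict_iff' (MeasurableSet.univ_pi fun _ => measurableSet_Ioi)).2
      (ae_of_all _ fun t ht => (Real.norm_eq_abs _).trans_le (hbound t ht)))

end OrthantIntegrals

section Gramian

noncomputable def gramian {ι r c : Type*} [Fintype ι] [Fintype c] (g : (ι → ℝ) → Matrix r c ℝ) :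
    Matrix r r ℝ :=
  Matrix.of fun i j => ∫ t in Set.univ.pi (fun _ : ι => Set.Ioi (0 : ℝ)), (g t * (g t)ᵀ) i j

variable {ι r c : Type*} [Fintype ι] [Fintype r] [DecidableEq r] [Fintype c] [DecidableEq c]
  {C α : ℝ}

lemma abs_mul_transpose_apply_le_exp {g : (ι → ℝ) → Matrix r c ℝ}
    (hbound : ∀ t ∈ Set.univ.pi (fun _ : ι => Set.Ioi (0 : ℝ)),
      opNorm (g t) ≤ C * Real.exp (-α * ∑ i, t i)) (i j : r) :
    ∀ t ∈ Set.univ.pi (fun _ : ι => Set.Ioi (0 : ℝ)),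
      |(g t * (g t)ᵀ) i j| ≤ C ^ 2 * Real.exp (-(2 * α) * ∑ i, t i) := fun t ht =>
  calc |(g t * (g t)ᵀ) i j| ≤ opNorm (g t) ^ 2 := abs_mul_transpose_apply_le _ i j
    _ ≤ (C * Real.exp (-α * ∑ i, t i)) ^ 2 := pow_le_pow_left₀ (opNorm_nonneg _) (hbound t ht) 2
    _ = C ^ 2 * Real.exp (-(2 * α) * ∑ i, t i) := by
        rw [mul_pow, sq (Real.exp _), ← Real.exp_add]
        ring_nf

lemma integrableOn_mul_transpose_apply {g : (ι → ℝ) → Matrix r c ℝ} (hg : Continuous g)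
    (hα : 0 < α) (hbound : ∀ t ∈ Set.univ.pi (fun _ : ι => Set.Ioi (0 : ℝ)),
      opNorm (g t) ≤ C * Real.exp (-α * ∑ i, t i)) (i j : r) :
    IntegrableOn (fun t => (g t * (g t)ᵀ) i j) (Set.univ.pi fun _ => Set.Ioi 0) :=
  integrableOn_pi_Ioi_of_abs_le_exp ((hg.matrix_mul hg.matrix_transpose).matrix_elem i j)
    (by positivity) (abs_mul_transpose_apply_le_exp hbound i j)

lemma abs_gramian_apply_le {g : (ι → ℝ) → Matrix r c ℝ} (hα : 0 < α)
    (hbound : ∀ t ∈ Set.univ.pi (fun _ : ι => Set.Ioi (0 : ℝ)),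
      opNorm (g t) ≤ C * Real.exp (-α * ∑ i, t i)) (i j : r) :
    |gramian g i j| ≤ C ^ 2 * (2 * α)⁻¹ ^ Fintype.card ι := by
  rw [gramian, Matrix.of_apply]
  exact abs_setIntegral_pi_Ioi_le_of_abs_le_exp (by positivity)
    (abs_mul_transpose_apply_le_exp hbound i j)

lemma summable_gramian {g : (k : ℕ) → (Fin (k + 1) → ℝ) → Matrix r c ℝ} {β κ b : ℝ}
    (hα : 0 < α) (hbound : ∀ k, ∀ t ∈ Set.univ.pi (fun _ : Fin (k + 1) => Set.Ioi (0 : ℝ)),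
      opNorm (g k t) ≤ β ^ (k + 1) * κ ^ k * b * Real.exp (-α * ∑ i, t i))
    (hκ : β ^ 2 * κ ^ 2 < 2 * α) :
    Summable fun k => gramian (g k) := by
  have h_ratio : β ^ 2 * κ ^ 2 * (2 * α)⁻¹ < 1 := by
    rwa [← div_eq_mul_inv, div_lt_one (by positivity)]
  have h_geom := (summable_geometric_of_lt_one (by positivity) h_ratio).mul_left
    (β ^ 2 * b ^ 2 * (2 * α)⁻¹)
  refine Pi.summable.2 fun i => Pi.summable.2 fun j => h_geom.of_norm_bounded fun k => ?_
  refine (abs_gramian_apply_le hα (hbound k) i j).trans_eq ?_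
  rw [Fintype.card_fin]
  ring

end Gramian

section SwitchedSystem

variable {n1 n2 m : ℕ}
  (A1 : Matrix (Fin n1) (Fin n1) ℝ) (A2 : Matrix (Fin n2) (Fin n2) ℝ)
  (B1 : Matrix (Fin n1) (Fin m) ℝ) (B2 : Matrix (Fin n2) (Fin m) ℝ)
  (K1 : Matrix (Fin n2) (Fin n1) ℝ) (K2 : Matrix (Fin n1) (Fin n2) ℝ)

lemma continuous_reachFun :
    ∀ k, Continuous (reachFun A1 A2 B1 B2 K1 K2 k).1 ∧
      Continuous (reachFun A1 A2 B1 B2 K1 K2 k).2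
  | 0 => ⟨((continuous_exp_smul A1).comp (continuous_apply 0)).matrix_mul continuous_const,
      ((continuous_exp_smul A2).comp (continuous_apply 0)).matrix_mul continuous_const⟩
  | k + 1 => by
    have h_tail : Continuous fun (t : Fin (k + 2) → ℝ) (i : Fin (k + 1)) => t i.succ :=
      continuous_pi fun i => continuous_apply i.succ
    obtain ⟨ih1, ih2⟩ := continuous_reachFun k
    exact ⟨(((continuous_exp_smul A1).comp (continuous_apply 0)).matrix_mul
        continuous_const).matrix_mul (ih2.comp h_tail),
      (((continuous_exp_smul A2).comp (continuous_apply 0)).matrix_mul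
        continuous_const).matrix_mul (ih1.comp h_tail)⟩

variable {A1 A2 B1 B2 K1 K2} {α β κ b : ℝ}

lemma opNorm_reachFun_le
    (hA1 : ∀ s, 0 ≤ s → opNorm (NormedSpace.exp (s • A1)) ≤ β * Real.exp (-α * s))
    (hA2 : ∀ s, 0 ≤ s → opNorm (NormedSpace.exp (s • A2)) ≤ β * Real.exp (-α * s))
    (hK1 : opNorm K1 ≤ κ) (hK2 : opNorm K2 ≤ κ) (hB1 : opNorm B1 ≤ b) (hB2 : opNorm B2 ≤ b) :
    ∀ (k : ℕ) (t : Fin (k + 1) → ℝ), (∀ i, 0 ≤ t i) →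
      opNorm ((reachFun A1 A2 B1 B2 K1 K2 k).1 t) ≤
          β ^ (k + 1) * κ ^ k * b * Real.exp (-α * ∑ i, t i) ∧
        opNorm ((reachFun A1 A2 B1 B2 K1 K2 k).2 t) ≤
          β ^ (k + 1) * κ ^ k * b * Real.exp (-α * ∑ i, t i)
  | 0, t, ht => by
    refine ⟨(opNorm_mul_le_of_le (hA1 _ (ht 0)) hB1).trans_eq ?_,
      (opNorm_mul_le_of_le (hA2 _ (ht 0)) hB2).trans_eq ?_⟩ <;>
    · rw [Fin.sum_univ_one]
      ring
  | k + 1, t, ht => by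
    obtain ⟨ih1, ih2⟩ := opNorm_reachFun_le hA1 hA2 hK1 hK2 hB1 hB2 k (fun i => t i.succ)
      fun i => ht i.succ
    have h_exp : Real.exp (-α * ∑ i, t i) =
        Real.exp (-α * t 0) * Real.exp (-α * ∑ i : Fin (k + 1), t i.succ) := by
      rw [Fin.sum_univ_succ, mul_add, Real.exp_add]
    refine ⟨(opNorm_mul_le_of_le (opNorm_mul_le_of_le (hA1 _ (ht 0)) hK2) ih2).trans_eq ?_,
      (opNorm_mul_le_of_le (opNorm_mul_le_of_le (hA2 _ (ht 0)) hK1) ih1).trans_eq ?_⟩ <;>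
    · rw [h_exp]
      ring

theorem reachGramians_converge (hα : 0 < α)
    (hA1 : ∀ s, 0 ≤ s → opNorm (NormedSpace.exp (s • A1)) ≤ β * Real.exp (-α * s))
    (hA2 : ∀ s, 0 ≤ s → opNorm (NormedSpace.exp (s • A2)) ≤ β * Real.exp (-α * s))
    (hK1 : opNorm K1 ≤ κ) (hK2 : opNorm K2 ≤ κ) (hκ : β ^ 2 * κ ^ 2 < 2 * α) :
    (∀ k : ℕ, ∀ i j, IntegrableOn
        (fun t => ((reachFun A1 A2 B1 B2 K1 K2 k).1 t * ((reachFun A1 A2 B1 B2 K1 K2 k).1 t)ᵀ) i j)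
        (Set.univ.pi (fun _ : Fin (k + 1) => Set.Ioi (0:ℝ)))) ∧
    (∀ k : ℕ, ∀ i j, IntegrableOn
        (fun t => ((reachFun A1 A2 B1 B2 K1 K2 k).2 t * ((reachFun A1 A2 B1 B2 K1 K2 k).2 t)ᵀ) i j)
        (Set.univ.pi (fun _ : Fin (k + 1) => Set.Ioi (0:ℝ)))) ∧
    Summable (fun k => reachGram1 A1 A2 B1 B2 K1 K2 k) ∧
    Summable (fun k => reachGram2 A1 A2 B1 B2 K1 K2 k) := by
  have h_bound := fun k t (ht : t ∈ Set.univ.pi fun _ : Fin (k + 1) => Set.Ioi (0 : ℝ)) =>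
    opNorm_reachFun_le hA1 hA2 hK1 hK2 (le_max_left (opNorm B1) (opNorm B2))
      (le_max_right _ _) k t fun i => (ht i (Set.mem_univ i)).le
  exact ⟨fun k => integrableOn_mul_transpose_apply (continuous_reachFun A1 A2 B1 B2 K1 K2 k).1 hα
      fun t ht => (h_bound k t ht).1,
    fun k => integrableOn_mul_transpose_apply (continuous_reachFun A1 A2 B1 B2 K1 K2 k).2 hα
      fun t ht => (h_bound k t ht).2,
    summable_gramian hα (fun k t ht => (h_bound k t ht).1) hκ,
    summable_gramian hα (fun k t ht => (h_bound k t ht).2) hκ⟩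

end SwitchedSystem

section Duality

variable {n1 n2 p : ℕ}
  (A1 : Matrix (Fin n1) (Fin n1) ℝ) (A2 : Matrix (Fin n2) (Fin n2) ℝ)
  (C1 : Matrix (Fin p) (Fin n1) ℝ) (C2 : Matrix (Fin p) (Fin n2) ℝ)
  (K1 : Matrix (Fin n2) (Fin n1) ℝ) (K2 : Matrix (Fin n1) (Fin n2) ℝ)

lemma obsFun_eq_transpose_reachFun :
    ∀ k, (obsFun A1 A2 C1 C2 K1 K2 k).1 =
        (fun t => ((reachFun A1ᵀ A2ᵀ C1ᵀ C2ᵀ K2ᵀ K1ᵀ k).1 t)ᵀ) ∧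
      (obsFun A1 A2 C1 C2 K1 K2 k).2 = (fun t => ((reachFun A1ᵀ A2ᵀ C1ᵀ C2ᵀ K2ᵀ K1ᵀ k).2 t)ᵀ)
  | 0 => by
    constructor <;> funext t <;>
      simp only [obsFun, reachFun, transpose_mul, transpose_transpose, exp_smul_transpose]
  | k + 1 => by
    obtain ⟨ih1, ih2⟩ := obsFun_eq_transpose_reachFun k
    constructor <;> funext t <;>
      simp only [obsFun, reachFun, ih1, ih2, transpose_mul, transpose_transpose,
        exp_smul_transpose, Matrix.mul_assoc]

variable {A1 A2 C1 C2 K1 K2} {α β κ : ℝ}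

theorem obsGramians_converge (hα : 0 < α)
    (hA1 : ∀ s, 0 ≤ s → opNorm (NormedSpace.exp (s • A1)) ≤ β * Real.exp (-α * s))
    (hA2 : ∀ s, 0 ≤ s → opNorm (NormedSpace.exp (s • A2)) ≤ β * Real.exp (-α * s))
    (hK1 : opNorm K1 ≤ κ) (hK2 : opNorm K2 ≤ κ) (hκ : β ^ 2 * κ ^ 2 < 2 * α) :
    (∀ k : ℕ, ∀ i j, IntegrableOn
        (fun t => (((obsFun A1 A2 C1 C2 K1 K2 k).1 t)ᵀ * (obsFun A1 A2 C1 C2 K1 K2 k).1 t) i j)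
        (Set.univ.pi (fun _ : Fin (k + 1) => Set.Ioi (0:ℝ)))) ∧
    (∀ k : ℕ, ∀ i j, IntegrableOn
        (fun t => (((obsFun A1 A2 C1 C2 K1 K2 k).2 t)ᵀ * (obsFun A1 A2 C1 C2 K1 K2 k).2 t) i j)
        (Set.univ.pi (fun _ : Fin (k + 1) => Set.Ioi (0:ℝ)))) ∧
    Summable (fun k => obsGram1 A1 A2 C1 C2 K1 K2 k) ∧
    Summable (fun k => obsGram2 A1 A2 C1 C2 K1 K2 k) := by
  have hA1' : ∀ s, 0 ≤ s → opNorm (NormedSpace.exp (s • A1ᵀ)) ≤ β * Real.exp (-α * s) :=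
    fun s hs => by rw [exp_smul_transpose, opNorm_transpose]; exact hA1 s hs
  have hA2' : ∀ s, 0 ≤ s → opNorm (NormedSpace.exp (s • A2ᵀ)) ≤ β * Real.exp (-α * s) :=
    fun s hs => by rw [exp_smul_transpose, opNorm_transpose]; exact hA2 s hs
  have h_reach := reachGramians_converge (B1 := C1ᵀ) (B2 := C2ᵀ) hα hA1' hA2'
    ((opNorm_transpose K2).trans_le hK2) ((opNorm_transpose K1).trans_le hK1) hκ
  simpa only [obsGram1, obsGram2, reachGram1, reachGram2, obsFun_eq_transpose_reachFun,
    transpose_transpose] using h_reach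

end Duality

/-- if `‖e^{A_D t}‖ ≤ β e^{−αt}` for the block-diagonal matrix
`A_D = blockdiag(A₁,A₂)` and `max(‖K₁‖,‖K₂‖) < √(2α)/β`, then for each mode the series of
level-`k` reachability Gramians and of level-`k` observability Gramians converge (all the
defining iterated integrals converge entrywise and the resulting series of matrices are
summable), i.e. the infinite reachability and observability Gramians of both modes exist. -/
theorem stmt_4 {n1 n2 m p : ℕ}
    (A1 : Matrix (Fin n1) (Fin n1) ℝ) (A2 : Matrix (Fin n2) (Fin n2) ℝ)
    (B1 : Matrix (Fin n1) (Fin m) ℝ) (B2 : Matrix (Fin n2) (Fin m) ℝ)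
    (C1 : Matrix (Fin p) (Fin n1) ℝ) (C2 : Matrix (Fin p) (Fin n2) ℝ)
    (K1 : Matrix (Fin n2) (Fin n1) ℝ) (K2 : Matrix (Fin n1) (Fin n2) ℝ)
    (α β : ℝ) (hα : 0 < α) (hβ : 0 < β)
    (hAD : ∀ t : ℝ, 0 ≤ t →
      opNorm (NormedSpace.exp (t • (Matrix.fromBlocks A1 0 0 A2))) ≤ β * Real.exp (-α * t))
    (hK : max (opNorm K1) (opNorm K2) < Real.sqrt (2 * α) / β) :
    (∀ k : ℕ, ∀ i j,
        IntegrableOn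
          (fun t => ((reachFun A1 A2 B1 B2 K1 K2 k).1 t *
              ((reachFun A1 A2 B1 B2 K1 K2 k).1 t)ᵀ) i j)
          (Set.univ.pi (fun _ : Fin (k + 1) => Set.Ioi (0:ℝ)))) ∧
    (∀ k : ℕ, ∀ i j,
        IntegrableOn
          (fun t => ((reachFun A1 A2 B1 B2 K1 K2 k).2 t *
              ((reachFun A1 A2 B1 B2 K1 K2 k).2 t)ᵀ) i j)
          (Set.univ.pi (fun _ : Fin (k + 1) => Set.Ioi (0:ℝ)))) ∧
    (∀ k : ℕ, ∀ i j,
        IntegrableOn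
          (fun t => (((obsFun A1 A2 C1 C2 K1 K2 k).1 t)ᵀ *
              (obsFun A1 A2 C1 C2 K1 K2 k).1 t) i j)
          (Set.univ.pi (fun _ : Fin (k + 1) => Set.Ioi (0:ℝ)))) ∧
    (∀ k : ℕ, ∀ i j,
        IntegrableOn
          (fun t => (((obsFun A1 A2 C1 C2 K1 K2 k).2 t)ᵀ *
              (obsFun A1 A2 C1 C2 K1 K2 k).2 t) i j)
          (Set.univ.pi (fun _ : Fin (k + 1) => Set.Ioi (0:ℝ)))) ∧
    Summable (fun k => reachGram1 A1 A2 B1 B2 K1 K2 k) ∧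
    Summable (fun k => reachGram2 A1 A2 B1 B2 K1 K2 k) ∧
    Summable (fun k => obsGram1 A1 A2 C1 C2 K1 K2 k) ∧
    Summable (fun k => obsGram2 A1 A2 C1 C2 K1 K2 k) := by
  have hA1 : ∀ s, 0 ≤ s → opNorm (NormedSpace.exp (s • A1)) ≤ β * Real.exp (-α * s) :=
    fun s hs => (opNorm_exp_smul_le_of_fromBlocks A1 A2 s).1.trans (hAD s hs)
  have hA2 : ∀ s, 0 ≤ s → opNorm (NormedSpace.exp (s • A2)) ≤ β * Real.exp (-α * s) :=
    fun s hs => (opNorm_exp_smul_le_of_fromBlocks A1 A2 s).2.trans (hAD s hs)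
  set κ := max (opNorm K1) (opNorm K2)
  have hκ : β ^ 2 * κ ^ 2 < 2 * α :=
    calc β ^ 2 * κ ^ 2 = (κ * β) ^ 2 := by ring
      _ < Real.sqrt (2 * α) ^ 2 := by
        have hκ_nonneg : 0 ≤ κ := (opNorm_nonneg K1).trans (le_max_left _ _)
        exact pow_lt_pow_left₀ ((lt_div_iff₀ hβ).1 hK) (by positivity) two_ne_zero
      _ = 2 * α := Real.sq_sqrt (by positivity)
  obtain ⟨hR1, hR2, hS1, hS2⟩ :=
    reachGramians_converge (B1 := B1) (B2 := B2) hα hA1 hA2 (le_max_left _ _) (le_max_right _ _) hκ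
  obtain ⟨hO1, hO2, hT1, hT2⟩ :=
    obsGramians_converge (C1 := C1) (C2 := C2) hα hA1 hA2 (le_max_left _ _) (le_max_right _ _) hκ
  exact ⟨hR1, hR2, hO1, hO2, hS1, hS2, hT1, hT2⟩
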